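/- Let K be a commutative ring, n ≥ 1, let f ∈ K[x₁, …, x_n] be a polynomial, and for indices i, j let S_{i,j} be the operator S_{i,j}(g) = ∂_i f · ∂_j g − ∂_j f · ∂_i g. Then for all indices i, j, k and every polynomial g: ∂_i(S_{j,k}(g)) − ∂_j(S_{i,k}(g)) + ∂_k(S_{i,j}(g)) = 0. -/
import Mathlib

open MvPolynomial

lemma pderiv_comm' {K : Type*} [CommSemiring K] {σ : Type*} [DecidableEq σ] (i j : σ)
    (p : MvPolynomial σ K) : pderiv i (pderiv j p) = pderiv j (pderiv i p) := by
  induction p using MvPolynomial.induction_on with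
  | C a => simp
  | add p q hp hq => simp [hp, hq]
  | mul_X p k hp =>
      simp only [pderiv_mul, map_add, pderiv_mul, hp, pderiv_X, Pi.single_apply]
      by_cases h : k = j <;> by_cases h2 : k = i <;>
        simp [h, h2, apply_ite (pderiv _)] <;> ring

/-- Koszul-type relation `∂_i S_{j,k} - ∂_j S_{i,k} + ∂_k S_{i,j} = 0`, where
`S_{i,j}(g) = ∂_i f · ∂_j g - ∂_j f · ∂_i g`. -/
theorem pderiv_S_koszul_relation
    {K : Type*} [CommRing K] {n : ℕ} (hn : 1 ≤ n)
    (f : MvPolynomial (Fin n) K) :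
    ∀ (i j k : Fin n) (g : MvPolynomial (Fin n) K),
      pderiv i (pderiv j f * pderiv k g - pderiv k f * pderiv j g) -
        pderiv j (pderiv i f * pderiv k g - pderiv k f * pderiv i g) +
        pderiv k (pderiv i f * pderiv j g - pderiv j f * pderiv i g) = 0 := by
  intro i j k g
  simp only [map_sub, pderiv_mul]
  rw [pderiv_comm' i j f, pderiv_comm' i k f, pderiv_comm' j k f,
      pderiv_comm' i j g, pderiv_comm' i k g, pderiv_comm' j k g]
  ring
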